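/- Suppose the graph has dimension at most D with constant c_D, let η > D and c_0 > 0 be real, and suppose |X_{i,j}| ≤ c_0·(1 + dist(i,j))^{−η} and |P_{i,j}| ≤ c_0·(1 + dist(i,j))^{−η} for all i, j. Then for all i, j ∈ L and all t ∈ ℝ, both |C^{xp}_{i,j}(t)| and |C^{px}_{i,j}(t)| are bounded above by δ_{i,j} + cosh(τ) / (a_0 · (1 + dist(i,j))^{η}), where δ_{i,j} is the Kronecker delta, a_0 = c_D·2^{η+1}·ζ(η + 1 − D) and τ = a_0·c_0·|t|. -/
import Mathlib

/-- The Riemann zeta function at a real argument, `ζ(s) = ∑_{n≥1} n^{−s}`. -/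
noncomputable def zetaReal (s : ℝ) : ℝ := ∑' n : ℕ, ((n : ℝ) + 1) ^ (-s)

lemma zetaSummable {s : ℝ} (hs : 1 < s) :
    Summable (fun n : ℕ => ((n : ℝ) + 1) ^ (-s)) := by
  have h : Summable (fun n : ℕ => (n : ℝ) ^ (-s)) :=
    Real.summable_nat_rpow.2 (by linarith)
  have := (summable_nat_add_iff 1).2 h
  simpa using this

lemma one_le_zetaReal {s : ℝ} (hs : 1 < s) : 1 ≤ zetaReal s := by
  have h := zetaSummable hs
  have := Summable.le_tsum h 0 (fun m _ => Real.rpow_nonneg (by positivity) _)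
  simpa [zetaReal] using this

lemma lr_series_bound {V : Type*} [Fintype V] [DecidableEq V]
    (G : SimpleGraph V) (hconn : G.Connected) (D : ℕ) (hD : 1 ≤ D)
    (cD : ℝ) (hcD : 1 ≤ cD)
    (hdim : ∀ i : V, ∀ r : ℕ, 1 ≤ r →
      ((Finset.univ.filter (fun k : V => G.dist i k = r)).card : ℝ) ≤ cD * (r : ℝ) ^ (D - 1))
    (η : ℝ) (hη : (D : ℝ) < η) (c₀ : ℝ) (hc₀ : 0 < c₀)
    (A B : Matrix V V ℝ)
    (hAdec : ∀ i j : V, |A i j| ≤ c₀ * (1 + (G.dist i j : ℝ)) ^ (-η))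
    (hBdec : ∀ i j : V, |B i j| ≤ c₀ * (1 + (G.dist i j : ℝ)) ^ (-η))
    (i j : V) (t : ℝ) :
    |∑' n : ℕ, (-1 : ℝ) ^ n * t ^ (2 * n) * (((A * B) ^ n) i j) / (Nat.factorial (2 * n))|
      ≤ (if i = j then (1:ℝ) else 0)
        + Real.cosh (cD * (2 : ℝ) ^ (η + 1) * zetaReal (η + 1 - D) * c₀ * |t|)
            / (cD * (2 : ℝ) ^ (η + 1) * zetaReal (η + 1 - D) * (1 + (G.dist i j : ℝ)) ^ η) := by
  have hη0 : (0:ℝ) < η := lt_of_le_of_lt (by exact_mod_cast Nat.cast_nonneg D) hη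
  set s : ℝ := η + 1 - D with hs_def
  have hs : 1 < s := by simp only [hs_def]; linarith
  set ζ : ℝ := zetaReal s with hζ_def
  have hζ1 : 1 ≤ ζ := one_le_zetaReal hs
  set a₀ : ℝ := cD * (2 : ℝ) ^ (η + 1) * ζ with ha₀_def
  have h2pos : (0:ℝ) < (2:ℝ) ^ (η+1) := Real.rpow_pos_of_pos (by norm_num) _
  have ha₀pos : 0 < a₀ := by
    have := mul_pos (mul_pos (lt_of_lt_of_le one_pos hcD) h2pos) (lt_of_lt_of_le one_pos hζ1)
    simpa [ha₀_def] using this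
  set F : V → V → ℝ := fun u v => (1 + (G.dist u v : ℝ)) ^ (-η) with hF_def
  have hFpos : ∀ u v, 0 < F u v := fun u v => Real.rpow_pos_of_pos (by positivity) _
  -- sphere sum bound
  have hsphere : ∀ u : V, ∑ k : V, F u k ≤ cD * ζ := by
    intro u
    have hsum : Summable (fun n : ℕ => ((n : ℝ) + 1) ^ (-s)) := zetaSummable hs
    simp only [hF_def, hζ_def, zetaReal]
    set T : Finset ℕ := Finset.univ.image (fun k : V => G.dist u k) with hT
    have hmap : ∀ k ∈ (Finset.univ : Finset V), G.dist u k ∈ T :=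
      fun k hk => Finset.mem_image_of_mem _ hk
    have hfib := Finset.sum_fiberwise_of_maps_to hmap (fun k : V => (1 + (G.dist u k : ℝ)) ^ (-η))
    rw [← hfib]
    have hterm : ∀ r ∈ T,
        (∑ k ∈ Finset.univ.filter (fun k => G.dist u k = r), (1 + (G.dist u k : ℝ)) ^ (-η))
          ≤ cD * ((r : ℝ) + 1) ^ (-s) := by
      intro r _
      have hconst : (∑ k ∈ Finset.univ.filter (fun k => G.dist u k = r),
          (1 + (G.dist u k : ℝ)) ^ (-η))
          = ((Finset.univ.filter (fun k : V => G.dist u k = r)).card : ℝ)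
              * (1 + (r : ℝ)) ^ (-η) := by
        rw [Finset.sum_congr rfl (fun k hk => by
          rw [(Finset.mem_filter.1 hk).2]), Finset.sum_const, nsmul_eq_mul]
      rw [hconst]
      rcases Nat.eq_zero_or_pos r with hr | hr
      · subst hr
        have : Finset.univ.filter (fun k : V => G.dist u k = 0) = {u} := by
          ext k
          simp [hconn.dist_eq_zero_iff, eq_comm]
        rw [this]
        simp only [Finset.card_singleton, Nat.cast_one, one_mul, Nat.cast_zero]
        rw [show ((1:ℝ) + 0) = 1 by norm_num, show ((0:ℝ) + 1) = 1 by norm_num,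
          Real.one_rpow, Real.one_rpow]
        linarith
      · have hcard := hdim u r hr
        have hbase : (0:ℝ) < (r:ℝ) + 1 := by positivity
        have hpow1 : (r:ℝ) ^ (D - 1) ≤ ((r:ℝ) + 1) ^ (D - 1) :=
          pow_le_pow_left₀ (by positivity) (by linarith) _
        have hrpow : ((r:ℝ) + 1) ^ ((D:ℝ) - 1) = ((r:ℝ) + 1) ^ (D - 1) := by
          rw [← Real.rpow_natCast ((r:ℝ) + 1) (D - 1), Nat.cast_sub hD, Nat.cast_one]
        have key : ((r:ℝ) + 1) ^ (D - 1) * ((r:ℝ) + 1) ^ (-η) = ((r:ℝ) + 1) ^ (-s) := by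
          rw [← hrpow, ← Real.rpow_add hbase]
          congr 1
          rw [hs_def]; ring
        calc ((Finset.univ.filter (fun k : V => G.dist u k = r)).card : ℝ)
              * (1 + (r : ℝ)) ^ (-η)
            ≤ (cD * ((r:ℝ)+1) ^ (D-1)) * ((r:ℝ) + 1) ^ (-η) := by
              rw [show (1 + (r:ℝ)) = (r:ℝ) + 1 by ring]
              exact mul_le_mul (hcard.trans (by nlinarith [Real.rpow_nonneg hbase.le (-η)] ))
                le_rfl (Real.rpow_nonneg hbase.le _) (by positivity)
          _ = cD * ((r:ℝ) + 1) ^ (-s) := by rw [mul_assoc, key]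
    calc (∑ r ∈ T, ∑ k ∈ Finset.univ.filter (fun k => G.dist u k = r),
            (1 + (G.dist u k : ℝ)) ^ (-η))
        ≤ ∑ r ∈ T, cD * ((r : ℝ) + 1) ^ (-s) := Finset.sum_le_sum hterm
      _ = cD * ∑ r ∈ T, ((r : ℝ) + 1) ^ (-s) := by rw [Finset.mul_sum]
      _ ≤ cD * ∑' n : ℕ, ((n : ℝ) + 1) ^ (-s) := by
          have := Summable.sum_le_tsum T (fun m _ => Real.rpow_nonneg (by positivity) _) hsum
          exact mul_le_mul_of_nonneg_left this (by linarith)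

  have hsphere' : ∀ v : V, ∑ k : V, F k v ≤ cD * ζ := by
    intro v
    have : ∀ k, F k v = F v k := by
      intro k; simp only [hF_def, SimpleGraph.dist_comm]
    simpa [this] using hsphere v
  -- convolution bound
  have hconv : ∀ u v : V, ∑ k : V, F u k * F k v ≤ a₀ * F u v := by
    intro u v
    rw [ha₀_def]
    have h2pos : (0:ℝ) < (2:ℝ) ^ η := Real.rpow_pos_of_pos (by norm_num) _
    have hkey : ∀ k : V, F u k * F k v ≤ ((2:ℝ) ^ η * F u v) * (F u k + F k v) := by
      intro k
      have htri : (G.dist u v : ℝ) ≤ (G.dist u k : ℝ) + (G.dist k v : ℝ) := by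
        exact_mod_cast hconn.dist_triangle
      have hmin : min (F u k) (F k v) ≤ (2:ℝ) ^ η * F u v := by
        have hhalf : ((1 + (G.dist u v : ℝ)) / 2) ^ (-η) = (2:ℝ) ^ η * F u v := by
          rw [hF_def]
          rw [Real.div_rpow (by positivity) (by norm_num), Real.rpow_neg (by norm_num : (0:ℝ) ≤ 2)]
          field_simp
        rcases le_total (G.dist u k : ℝ) (G.dist k v : ℝ) with h | h
        · -- dist k v is big: F k v ≤ 2^η F u v
          have hb : (1 + (G.dist u v : ℝ)) / 2 ≤ 1 + (G.dist k v : ℝ) := by linarith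
          have := Real.rpow_le_rpow_of_nonpos (by positivity) hb (by linarith : -η ≤ 0)
          rw [hhalf] at this
          exact le_trans (min_le_right _ _) (by simp only [hF_def] at this ⊢; exact this)
        · have hb : (1 + (G.dist u v : ℝ)) / 2 ≤ 1 + (G.dist u k : ℝ) := by linarith
          have := Real.rpow_le_rpow_of_nonpos (by positivity) hb (by linarith : -η ≤ 0)
          rw [hhalf] at this
          exact le_trans (min_le_left _ _) (by simp only [hF_def] at this ⊢; exact this)
      have hmax : max (F u k) (F k v) ≤ F u k + F k v := by
        rcases max_cases (F u k) (F k v) with ⟨h1, _⟩ | ⟨h1, _⟩ <;>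
          [linarith [(hFpos k v).le]; linarith [(hFpos u k).le]]
      calc F u k * F k v = min (F u k) (F k v) * max (F u k) (F k v) := (min_mul_max _ _).symm
        _ ≤ ((2:ℝ) ^ η * F u v) * (F u k + F k v) :=
            mul_le_mul hmin hmax (le_max_iff.2 (Or.inl (hFpos u k).le))
              (mul_nonneg h2pos.le (hFpos u v).le)
    calc ∑ k : V, F u k * F k v ≤ ∑ k : V, ((2:ℝ) ^ η * F u v) * (F u k + F k v) :=
          Finset.sum_le_sum (fun k _ => hkey k)
      _ = ((2:ℝ) ^ η * F u v) * ((∑ k : V, F u k) + ∑ k : V, F k v) := by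
          rw [← Finset.mul_sum, Finset.sum_add_distrib]
      _ ≤ ((2:ℝ) ^ η * F u v) * (cD * ζ + cD * ζ) := by
          have := add_le_add (hsphere u) (hsphere' v)
          exact mul_le_mul_of_nonneg_left this (mul_nonneg h2pos.le (hFpos u v).le)
      _ = (cD * (2:ℝ) ^ (η + 1) * ζ) * F u v := by
          rw [Real.rpow_add_one (by norm_num : (2:ℝ) ≠ 0)]
          ring

  -- entry bounds for powers
  have hpow : ∀ n : ℕ, ∀ u v : V, |(((A * B) ^ (n+1)) u v)|
      ≤ (a₀ * c₀) ^ (2 * (n+1)) / a₀ * F u v := by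
    have hA' : ∀ u v : V, |A u v| ≤ c₀ * F u v := by
      intro u v; rw [hF_def]; exact hAdec u v
    have hB' : ∀ u v : V, |B u v| ≤ c₀ * F u v := by
      intro u v; rw [hF_def]; exact hBdec u v
    have hM : ∀ u v : V, |(A * B) u v| ≤ (a₀ * c₀) ^ 2 / a₀ * F u v := by
      intro u v
      have h1 : |(A * B) u v| ≤ ∑ k : V, |A u k| * |B k v| := by
        rw [Matrix.mul_apply]
        exact (Finset.abs_sum_le_sum_abs _ _).trans (le_of_eq (by simp [abs_mul]))
      have h2 : ∑ k : V, |A u k| * |B k v| ≤ ∑ k : V, (c₀ * F u k) * (c₀ * F k v) :=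
        Finset.sum_le_sum fun k _ => mul_le_mul (hA' u k) (hB' k v) (abs_nonneg _)
          (mul_nonneg hc₀.le (hFpos u k).le)
      have h3 : ∑ k : V, (c₀ * F u k) * (c₀ * F k v) = c₀ ^ 2 * ∑ k : V, F u k * F k v := by
        rw [Finset.mul_sum]; exact Finset.sum_congr rfl fun k _ => by ring
      have h4 : c₀ ^ 2 * ∑ k : V, F u k * F k v ≤ c₀ ^ 2 * (a₀ * F u v) :=
        mul_le_mul_of_nonneg_left (hconv u v) (by positivity)
      have h5 : c₀ ^ 2 * (a₀ * F u v) = (a₀ * c₀) ^ 2 / a₀ * F u v := by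
        field_simp
      linarith
    intro n
    induction n with
    | zero => intro u v; simpa using hM u v
    | succ n ih =>
      intro u v
      have hexp : ((A * B) ^ (n+2)) u v = ∑ k : V, ((A * B) ^ (n+1)) u k * (A * B) k v := by
        rw [pow_succ, Matrix.mul_apply]
      have h1 : |((A * B) ^ (n+2)) u v| ≤ ∑ k : V, |((A * B) ^ (n+1)) u k| * |(A * B) k v| := by
        rw [hexp]
        exact (Finset.abs_sum_le_sum_abs _ _).trans (le_of_eq (by simp [abs_mul]))
      have h2 : ∑ k : V, |((A * B) ^ (n+1)) u k| * |(A * B) k v|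
          ≤ ∑ k : V, ((a₀ * c₀) ^ (2*(n+1)) / a₀ * F u k) * ((a₀ * c₀) ^ 2 / a₀ * F k v) :=
        Finset.sum_le_sum fun k _ => mul_le_mul (ih u k) (hM k v) (abs_nonneg _)
          (mul_nonneg (by positivity) (hFpos u k).le)
      have h3 : ∑ k : V, ((a₀ * c₀) ^ (2*(n+1)) / a₀ * F u k) * ((a₀ * c₀) ^ 2 / a₀ * F k v)
          = ((a₀ * c₀) ^ (2*(n+1)) / a₀ * ((a₀ * c₀) ^ 2 / a₀)) * ∑ k : V, F u k * F k v := by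
        rw [Finset.mul_sum]; exact Finset.sum_congr rfl fun k _ => by ring
      have h4 : ((a₀ * c₀) ^ (2*(n+1)) / a₀ * ((a₀ * c₀) ^ 2 / a₀)) * ∑ k : V, F u k * F k v
          ≤ ((a₀ * c₀) ^ (2*(n+1)) / a₀ * ((a₀ * c₀) ^ 2 / a₀)) * (a₀ * F u v) :=
        mul_le_mul_of_nonneg_left (hconv u v) (by positivity)
      have h5 : ((a₀ * c₀) ^ (2*(n+1)) / a₀ * ((a₀ * c₀) ^ 2 / a₀)) * (a₀ * F u v)
          = (a₀ * c₀) ^ (2*(n+2)) / a₀ * F u v := by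
        have hne : a₀ ≠ 0 := ne_of_gt ha₀pos
        field_simp
        ring
      linarith

  -- the series bound
  set τ : ℝ := a₀ * c₀ * |t| with hτ_def
  have hτ0 : 0 ≤ τ := by positivity
  set δ : ℝ := if i = j then (1:ℝ) else 0 with hδ_def
  have hδ01 : 0 ≤ δ ∧ δ ≤ 1 := by
    constructor <;> (rw [hδ_def]; split <;> norm_num)
  set a : ℕ → ℝ := fun n => (-1 : ℝ) ^ n * t ^ (2 * n) * (((A * B) ^ n) i j)
      / (Nat.factorial (2 * n)) with ha_def
  set g : ℕ → ℝ := fun n => match n with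
    | 0 => δ
    | (m+1) => τ ^ (2 * (m+1)) / (Nat.factorial (2 * (m+1))) * (F i j / a₀) with hg_def
  have hgnonneg : ∀ n, 0 ≤ g n := by
    intro n
    match n with
    | 0 => exact hδ01.1
    | (m+1) =>
      have := hFpos i j
      positivity
  have hcoshsum : Summable (fun n : ℕ => τ ^ (2 * n) / (Nat.factorial (2 * n) : ℝ)) :=
    (Real.hasSum_cosh τ).summable
  have hgsum : Summable g := by
    refine Summable.of_nonneg_of_le hgnonneg ?_ (hcoshsum.mul_left (max 1 (F i j / a₀)))
    · intro n
      match n with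
      | 0 =>
        simp only [hg_def, Nat.mul_zero, pow_zero, Nat.factorial_zero, Nat.cast_one]
        calc δ ≤ 1 := hδ01.2
          _ ≤ max 1 (F i j / a₀) * (1 / 1) := by simp [le_max_left]
      | (m+1) =>
        simp only [hg_def]
        rw [mul_comm (τ ^ (2 * (m+1)) / (Nat.factorial (2 * (m+1)) : ℝ))]
        apply mul_le_mul_of_nonneg_right (le_max_right _ _) (by positivity)
  have habs : ∀ n, |a n| ≤ g n := by
    intro n
    match n with
    | 0 =>
      simp only [ha_def, hg_def, hδ_def, Nat.mul_zero, pow_zero, Nat.factorial_zero]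
      rw [Matrix.one_apply]
      split <;> simp
    | (m+1) =>
      have h1 : |a (m+1)| = |t| ^ (2 * (m+1)) * |((A * B) ^ (m+1)) i j|
          / (Nat.factorial (2 * (m+1)) : ℝ) := by
        simp only [ha_def]
        rw [abs_div, abs_mul, abs_mul, abs_pow, abs_pow, abs_neg, abs_one, one_pow, one_mul,
          Nat.abs_cast]
      rw [h1]
      show |t| ^ (2 * (m+1)) * |((A * B) ^ (m+1)) i j| / (Nat.factorial (2 * (m+1)) : ℝ)
          ≤ τ ^ (2 * (m+1)) / (Nat.factorial (2 * (m+1)) : ℝ) * (F i j / a₀)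
      have h2 := hpow m i j
      have h3 : |t| ^ (2 * (m+1)) * |((A * B) ^ (m+1)) i j|
          ≤ |t| ^ (2 * (m+1)) * ((a₀ * c₀) ^ (2 * (m+1)) / a₀ * F i j) :=
        mul_le_mul_of_nonneg_left h2 (by positivity)
      have h4 : |t| ^ (2 * (m+1)) * ((a₀ * c₀) ^ (2 * (m+1)) / a₀ * F i j)
          = τ ^ (2 * (m+1)) * (F i j / a₀) := by
        rw [hτ_def, mul_pow]
        ring
      have hfac : (0:ℝ) < (Nat.factorial (2 * (m+1)) : ℝ) := by positivity
      have h5 : |t| ^ (2 * (m+1)) * |((A * B) ^ (m+1)) i j| ≤ τ ^ (2 * (m+1)) * (F i j / a₀) :=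
        h3.trans (le_of_eq h4)
      rw [show τ ^ (2 * (m+1)) / (Nat.factorial (2 * (m+1)) : ℝ) * (F i j / a₀)
          = τ ^ (2 * (m+1)) * (F i j / a₀) / (Nat.factorial (2 * (m+1)) : ℝ) from by ring]
      gcongr
  have habssum : Summable (fun n => |a n|) :=
    Summable.of_nonneg_of_le (fun n => abs_nonneg _) habs hgsum
  have hasum : Summable a := habssum.of_abs
  have step1 : |∑' n, a n| ≤ ∑' n, |a n| := by
    have h : Summable (fun n => ‖a n‖) := by simpa only [Real.norm_eq_abs] using habssum
    simpa only [Real.norm_eq_abs] using norm_tsum_le_tsum_norm h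
  have step2 : ∑' n, |a n| ≤ ∑' n, g n := Summable.tsum_le_tsum habs habssum hgsum
  have step3 : ∑' n, g n = δ + (∑' m : ℕ, τ ^ (2 * (m+1)) / (Nat.factorial (2 * (m+1)) : ℝ))
      * (F i j / a₀) := by
    rw [Summable.tsum_eq_zero_add hgsum]
    congr 1
    rw [← tsum_mul_right]
  have step4 : (∑' m : ℕ, τ ^ (2 * (m+1)) / (Nat.factorial (2 * (m+1)) : ℝ)) ≤ Real.cosh τ := by
    have h := (Real.cosh_eq_tsum τ)
    have h2 := Summable.tsum_eq_zero_add hcoshsum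
    have h3 : (τ : ℝ) ^ (2 * 0) / (Nat.factorial (2 * 0) : ℝ) = 1 := by norm_num
    rw [h3] at h2
    have : (∑' m : ℕ, τ ^ (2 * (m+1)) / (Nat.factorial (2 * (m+1)) : ℝ)) = Real.cosh τ - 1 := by
      rw [h]; rw [h2]; ring
    rw [this]
    linarith [Real.cosh_pos (x := τ)]
  have step5 : (∑' m : ℕ, τ ^ (2 * (m+1)) / (Nat.factorial (2 * (m+1)) : ℝ)) * (F i j / a₀)
      ≤ Real.cosh τ * (F i j / a₀) :=
    mul_le_mul_of_nonneg_right step4 (div_nonneg (hFpos i j).le ha₀pos.le)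
  have hfinal : Real.cosh τ * (F i j / a₀)
      = Real.cosh τ / (a₀ * (1 + (G.dist i j : ℝ)) ^ η) := by
    have hb : (0:ℝ) < 1 + (G.dist i j : ℝ) := by positivity
    have h1 : F i j = ((1 + (G.dist i j : ℝ)) ^ η)⁻¹ := by
      rw [hF_def]
      exact Real.rpow_neg hb.le η
    have h3 : (((1 + (G.dist i j : ℝ)) ^ η)⁻¹ / a₀)
        = (a₀ * (1 + (G.dist i j : ℝ)) ^ η)⁻¹ := by
      rw [mul_inv, div_eq_mul_inv]
      ring
    rw [h1, h3, div_eq_mul_inv]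
  calc |∑' n, a n| ≤ ∑' n, |a n| := step1
    _ ≤ ∑' n, g n := step2
    _ ≤ δ + Real.cosh τ * (F i j / a₀) := by rw [step3]; linarith
    _ = δ + Real.cosh τ / (a₀ * (1 + (G.dist i j : ℝ)) ^ η) := by rw [hfinal]


/-- `C^{xp}_{i,j}(t) = −∑_{n≥0} (−1)^n t^{2n} ((PX)^n)_{i,j}/(2n)!`,
which equals `i[x̂_i(t), p̂_j]` for the harmonic Hamiltonian. -/
noncomputable def Cxp {V : Type*} [Fintype V] [DecidableEq V]
    (X P : Matrix V V ℝ) (i j : V) (t : ℝ) : ℝ :=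
  -∑' n : ℕ, (-1 : ℝ) ^ n * t ^ (2 * n) * (((P * X) ^ n) i j) / (Nat.factorial (2 * n))

/-- `C^{px}_{i,j}(t) = ∑_{n≥0} (−1)^n t^{2n} ((XP)^n)_{i,j}/(2n)!`,
which equals `i[p̂_i(t), x̂_j]` for the harmonic Hamiltonian. -/
noncomputable def Cpx {V : Type*} [Fintype V] [DecidableEq V]
    (X P : Matrix V V ℝ) (i j : V) (t : ℝ) : ℝ :=
  ∑' n : ℕ, (-1 : ℝ) ^ n * t ^ (2 * n) * (((X * P) ^ n) i j) / (Nat.factorial (2 * n))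

/-- **Lieb-Robinson bounds for non-local (algebraically decaying) couplings**,
`xp` and `px` commutators: both are bounded by `δ_{i,j} + cosh(τ)/(a₀·(1 + dist(i,j))^η)`
with `a₀ = c_D·2^{η+1}·ζ(η + 1 − D)` and `τ = a₀·c₀·|t|`. -/
theorem lieb_robinson_nonlocal_xp_px {V : Type*} [Fintype V] [DecidableEq V]
    (G : SimpleGraph V) (hconn : G.Connected) (D : ℕ) (hD : 1 ≤ D)
    (cD : ℝ) (hcD : 1 ≤ cD)
    (hdim : ∀ i : V, ∀ r : ℕ, 1 ≤ r →
      ((Finset.univ.filter (fun k : V => G.dist i k = r)).card : ℝ) ≤ cD * (r : ℝ) ^ (D - 1))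
    (η : ℝ) (hη : (D : ℝ) < η) (c₀ : ℝ) (hc₀ : 0 < c₀)
    (X P : Matrix V V ℝ) (hX : X.IsSymm) (hP : P.IsSymm)
    (hXdec : ∀ i j : V, |X i j| ≤ c₀ * (1 + (G.dist i j : ℝ)) ^ (-η))
    (hPdec : ∀ i j : V, |P i j| ≤ c₀ * (1 + (G.dist i j : ℝ)) ^ (-η))
    (i j : V) (t : ℝ) :
    let a₀ : ℝ := cD * (2 : ℝ) ^ (η + 1) * zetaReal (η + 1 - D)
    let τ : ℝ := a₀ * c₀ * |t|
    let δ : ℝ := if i = j then 1 else 0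
    |Cxp X P i j t| ≤ δ + Real.cosh τ / (a₀ * (1 + (G.dist i j : ℝ)) ^ η) ∧
    |Cpx X P i j t| ≤ δ + Real.cosh τ / (a₀ * (1 + (G.dist i j : ℝ)) ^ η) := by
  intro a₀ τ δ
  constructor
  · have h := lr_series_bound G hconn D hD cD hcD hdim η hη c₀ hc₀ P X hPdec hXdec i j t
    rw [Cxp, abs_neg]
    exact h
  · have h := lr_series_bound G hconn D hD cD hcD hdim η hη c₀ hc₀ X P hXdec hPdec i j t
    rw [Cpx]
    exact h
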